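/- arXiv:1209.5018 — 5 statements merged into one kernel-verified Lean document; each statement's English description precedes it below -/
import Mathlib

section
/- (Amice) The Amice transform $\mu \mapsto \mathcal{A}(\mu)$, sending a continuous linear functional $\mu$ on $C(\mathbb{Z}_p, \mathbb{Q}_p)$ to the power series $\sum_{k\geq 0} \mu(\binom{x}{k}) (q-1)^k$, is an isomorphism of $\mathbb{Q}_p$-Banach spaces from the space of measures on $\mathbb{Z}_p$ onto $\mathbb{Z}_p[[q-1]] \otimes_{\mathbb{Z}_p} \mathbb{Q}_p$ (power series with bounded coefficients), and it takes the convolution product of measures to the product of power series. -/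
/-!
Mahler's theorem expands every `f ∈ C(ℤ_p, ℚ_p)` as `f = ∑ₙ (Δⁿf)(0) (x choose n)` with
`(Δⁿf)(0) → 0` and `‖(Δⁿf)(0)‖ ≤ ‖f‖`. Hence a measure `μ` is determined by its values
`μ(x choose n)`, which are bounded by `‖μ‖` because `‖(x choose n)‖ = 1`; conversely any bounded
sequence `(aₙ)` defines the measure `f ↦ ∑ₙ (Δⁿf)(0) aₙ` of norm at most `sup ‖aₙ‖`. For
convolution, the Vandermonde identity `(x+y choose n) = ∑_{i+j=n} (x choose i)(y choose j)`
turns `μ * ν` applied to `(x choose n)` into the `n`-th coefficient of `𝒜(μ) 𝒜(ν)`.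
-/

/-- The Amice transform of a measure (continuous linear functional on `C(ℤ_p, ℚ_p)`):
`𝒜(μ) = ∑ₖ μ((x choose k)) (q-1)ᵏ`, as a power series in `T = q - 1`. -/
noncomputable def amice {p : ℕ} [Fact p.Prime]
    (μ : C(ℤ_[p], ℚ_[p]) →L[ℚ_[p]] ℚ_[p]) : PowerSeries ℚ_[p] :=
  PowerSeries.mk fun k => μ ⟨fun x => ((mahler k x : ℤ_[p]) : ℚ_[p]),
    continuous_subtype_val.comp (mahler k).continuous⟩

open Filter Finset
open scoped fwdDiff Topology

namespace PadicInt

variable {p : ℕ} [Fact p.Prime]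

instance : IsBoundedSMul ℤ_[p] ℚ_[p] :=
  IsBoundedSMul.of_norm_smul_le fun r x => by
    rw [Algebra.smul_def, algebraMap_apply, norm_mul, norm_def]

noncomputable def mahlerQp (k : ℕ) : C(ℤ_[p], ℚ_[p]) :=
  ⟨fun x => ((mahler k x : ℤ_[p]) : ℚ_[p]), continuous_subtype_val.comp (mahler k).continuous⟩

lemma mahlerQp_apply (k : ℕ) (x : ℤ_[p]) : mahlerQp k x = ((mahler k x : ℤ_[p]) : ℚ_[p]) := rfl

lemma mahlerTerm_eq_smul_mahlerQp (a : ℚ_[p]) (n : ℕ) : mahlerTerm a n = a • mahlerQp n := by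
  ext x
  rw [mahlerTerm_apply, ContinuousMap.smul_apply, smul_eq_mul, mahlerQp_apply, mul_comm]
  rfl

@[simp] lemma norm_mahlerQp (k : ℕ) : ‖(mahlerQp k : C(ℤ_[p], ℚ_[p]))‖ = 1 := by
  simpa [mahlerTerm_eq_smul_mahlerQp] using norm_mahlerTerm (p := p) (1 : ℚ_[p]) k

lemma fwdDiff_iter_mahlerQp_zero (k n : ℕ) :
    (Δ_[1])^[n] (mahlerQp k : ℤ_[p] → ℚ_[p]) 0 = if n = k then 1 else 0 := by
  have hδ : Tendsto (fun n => if n = k then (1 : ℚ_[p]) else 0) atTop (𝓝 0) :=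
    tendsto_atTop_of_eventually_const (i₀ := k + 1) fun i hi => if_neg (by omega)
  have hseries : mahlerSeries (fun n => if n = k then (1 : ℚ_[p]) else 0) = mahlerQp k := by
    rw [mahlerSeries, tsum_eq_single k fun n hn => by simp [mahlerTerm_eq_smul_mahlerQp, hn]]
    simp [mahlerTerm_eq_smul_mahlerQp]
  rw [← hseries, fwdDiff_mahlerSeries hδ]

section Measure

variable (μ : C(ℤ_[p], ℚ_[p]) →L[ℚ_[p]] ℚ_[p])

lemma hasSum_fwdDiff_mul_apply_mahlerQp (f : C(ℤ_[p], ℚ_[p])) :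
    HasSum (fun n => (Δ_[1])^[n] f 0 * μ (mahlerQp n)) (μ f) := by
  convert (hasSum_mahler f).mapL μ using 2 with n
  rw [mahlerTerm_eq_smul_mahlerQp, map_smul, smul_eq_mul]

lemma norm_apply_mahlerQp_le (k : ℕ) : ‖μ (mahlerQp k)‖ ≤ ‖μ‖ := by
  simpa using μ.le_opNorm (mahlerQp k)

lemma eq_of_apply_mahlerQp_eq {ν : C(ℤ_[p], ℚ_[p]) →L[ℚ_[p]] ℚ_[p]}
    (h : ∀ k, μ (mahlerQp k) = ν (mahlerQp k)) : μ = ν := by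
  ext f
  refine (hasSum_fwdDiff_mul_apply_mahlerQp μ f).unique ?_
  simpa only [h] using hasSum_fwdDiff_mul_apply_mahlerQp ν f

end Measure

section BoundedSequence

variable {a : ℕ → ℚ_[p]} {C : ℝ}

lemma summable_fwdDiff_mul (ha : ∀ n, ‖a n‖ ≤ C) (f : C(ℤ_[p], ℚ_[p])) :
    Summable fun n => (Δ_[1])^[n] f 0 * a n := by
  refine NonarchimedeanAddGroup.summable_of_tendsto_cofinite_zero ?_
  rw [Nat.cofinite_eq_atTop]
  exact (fwdDiff_tendsto_zero f).zero_mul_isBoundedUnder_le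
    (isBoundedUnder_of ⟨C, fun n => ha n⟩)

lemma norm_tsum_fwdDiff_mul_le (ha : ∀ n, ‖a n‖ ≤ C) (f : C(ℤ_[p], ℚ_[p])) :
    ‖∑' n, (Δ_[1])^[n] f 0 * a n‖ ≤ C * ‖f‖ := by
  have hC : 0 ≤ C := (norm_nonneg _).trans (ha 0)
  refine IsUltrametricDist.norm_tsum_le_of_forall_le_of_nonneg
    (mul_nonneg hC (norm_nonneg _)) fun n => ?_
  rw [norm_mul, mul_comm C]
  exact mul_le_mul (IsUltrametricDist.norm_fwdDiff_iter_apply_le 1 f 0 n) (ha n)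
    (norm_nonneg _) (norm_nonneg _)

noncomputable def inverseAmice (a : ℕ → ℚ_[p]) (C : ℝ) (ha : ∀ n, ‖a n‖ ≤ C) :
    C(ℤ_[p], ℚ_[p]) →L[ℚ_[p]] ℚ_[p] :=
  LinearMap.mkContinuous
    { toFun := fun f => ∑' n, (Δ_[1])^[n] f 0 * a n
      map_add' := fun f g => by
        simp only [ContinuousMap.coe_add, fwdDiff_iter_add, Pi.add_apply, add_mul]
        exact (summable_fwdDiff_mul ha f).tsum_add (summable_fwdDiff_mul ha g)
      map_smul' := fun c f => by
        simp only [ContinuousMap.coe_smul, fwdDiff_iter_const_smul, Pi.smul_apply, smul_eq_mul,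
          mul_assoc, tsum_mul_left, RingHom.id_apply] }
    C (norm_tsum_fwdDiff_mul_le ha)

lemma inverseAmice_apply (ha : ∀ n, ‖a n‖ ≤ C) (f : C(ℤ_[p], ℚ_[p])) :
    inverseAmice a C ha f = ∑' n, (Δ_[1])^[n] f 0 * a n := rfl

lemma inverseAmice_apply_mahlerQp (ha : ∀ n, ‖a n‖ ≤ C) (k : ℕ) :
    inverseAmice a C ha (mahlerQp k) = a k := by
  rw [inverseAmice_apply, tsum_eq_single k fun n hn => by
    rw [fwdDiff_iter_mahlerQp_zero, if_neg hn, zero_mul]]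
  rw [fwdDiff_iter_mahlerQp_zero, if_pos rfl, one_mul]

end BoundedSequence

lemma opNorm_eq_iSup_norm_apply_mahlerQp (μ : C(ℤ_[p], ℚ_[p]) →L[ℚ_[p]] ℚ_[p]) :
    ‖μ‖ = ⨆ k, ‖μ (mahlerQp k)‖ := by
  have hbdd : BddAbove (Set.range fun k => ‖μ (mahlerQp k)‖) :=
    ⟨‖μ‖, Set.forall_mem_range.2 (norm_apply_mahlerQp_le μ)⟩
  refine le_antisymm (μ.opNorm_le_bound ((norm_nonneg _).trans (le_ciSup hbdd 0)) fun f => ?_)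
    (ciSup_le (norm_apply_mahlerQp_le μ))
  rw [← (hasSum_fwdDiff_mul_apply_mahlerQp μ f).tsum_eq]
  exact norm_tsum_fwdDiff_mul_le (le_ciSup hbdd) f

lemma mahlerQp_comp_add_left (n : ℕ) (x : ℤ_[p]) :
    (mahlerQp n).comp ⟨fun y => x + y, by fun_prop⟩
      = ∑ ij ∈ antidiagonal n, ((mahler ij.1 x : ℤ_[p]) : ℚ_[p]) • mahlerQp ij.2 := by
  ext y
  simp only [ContinuousMap.comp_apply, ContinuousMap.coe_mk, mahlerQp_apply, mahler_apply,
    ContinuousMap.coe_sum, Finset.sum_apply, ContinuousMap.smul_apply, smul_eq_mul,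
    Ring.add_choose_eq n (Commute.all x y)]
  exact map_sum Coe.ringHom _ _

end PadicInt

open PadicInt

section Amice

variable {p : ℕ} [Fact p.Prime]

lemma coeff_amice (μ : C(ℤ_[p], ℚ_[p]) →L[ℚ_[p]] ℚ_[p]) (k : ℕ) :
    PowerSeries.coeff k (amice μ) = μ (mahlerQp k) :=
  PowerSeries.coeff_mk _ _

lemma amice_eq_mul_of_convolution {μ ν ρ : C(ℤ_[p], ℚ_[p]) →L[ℚ_[p]] ℚ_[p]}
    (hρ : ∀ f h : C(ℤ_[p], ℚ_[p]),
      (∀ x : ℤ_[p], h x = ν (f.comp ⟨fun y => x + y, by fun_prop⟩)) → ρ f = μ h) :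
    amice ρ = amice μ * amice ν := by
  ext n
  let h : C(ℤ_[p], ℚ_[p]) := ∑ ij ∈ antidiagonal n, ν (mahlerQp ij.2) • mahlerQp ij.1
  have hν : ∀ x, h x = ν ((mahlerQp n).comp ⟨fun y => x + y, by fun_prop⟩) := fun x => by
    simp only [h, mahlerQp_comp_add_left, map_sum, map_smul, ContinuousMap.coe_sum,
      Finset.sum_apply, ContinuousMap.smul_apply, smul_eq_mul, mahlerQp_apply, mul_comm]
  rw [coeff_amice, hρ _ h hν, PowerSeries.coeff_mul, map_sum]
  simp only [map_smul, smul_eq_mul, coeff_amice, mul_comm]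

end Amice

/-- **Amice's theorem.** The Amice transform is an isometric isomorphism from the space
of measures on `ℤ_p` onto the ring `ℤ_p[[q-1]] ⊗ ℚ_p` of power series with bounded
coefficients, and it takes convolution of measures to multiplication of power series. -/
theorem stmt5 (p : ℕ) [Fact p.Prime] :
    -- lands in bounded power series
    (∀ μ : C(ℤ_[p], ℚ_[p]) →L[ℚ_[p]] ℚ_[p],
      ∃ C : ℝ, ∀ k : ℕ, ‖PowerSeries.coeff k (amice μ)‖ ≤ C) ∧
    -- injective
    (Function.Injective (amice (p := p))) ∧
    -- surjective onto bounded power series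
    (∀ F : PowerSeries ℚ_[p], (∃ C : ℝ, ∀ k : ℕ, ‖PowerSeries.coeff k F‖ ≤ C) →
      ∃ μ : C(ℤ_[p], ℚ_[p]) →L[ℚ_[p]] ℚ_[p], amice μ = F) ∧
    -- isometric: the operator norm of `μ` is the sup of the coefficient norms
    (∀ μ : C(ℤ_[p], ℚ_[p]) →L[ℚ_[p]] ℚ_[p],
      ‖μ‖ = ⨆ k : ℕ, ‖PowerSeries.coeff k (amice μ)‖) ∧
    -- convolution goes to multiplication: if `ρ = μ * ν` in the sense that
    -- `ρ(f) = μ(x ↦ ν(y ↦ f (x+y)))`, then `𝒜(ρ) = 𝒜(μ) ⬝ 𝒜(ν)`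
    (∀ μ ν ρ : C(ℤ_[p], ℚ_[p]) →L[ℚ_[p]] ℚ_[p],
      (∀ f h : C(ℤ_[p], ℚ_[p]),
        (∀ x : ℤ_[p], h x = ν (f.comp ⟨fun y => x + y, by fun_prop⟩)) → ρ f = μ h) →
      amice ρ = amice μ * amice ν) := by
  refine ⟨fun μ => ⟨‖μ‖, fun k => ?_⟩, fun μ ν hμν => ?_, fun F ⟨C, hC⟩ => ?_,
    fun μ => ?_, fun μ ν ρ => amice_eq_mul_of_convolution⟩
  · exact coeff_amice μ k ▸ norm_apply_mahlerQp_le μ k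
  · refine eq_of_apply_mahlerQp_eq μ fun k => ?_
    simpa only [coeff_amice] using congrArg (PowerSeries.coeff k) hμν
  · refine ⟨inverseAmice (PowerSeries.coeff · F) C hC, PowerSeries.ext fun k => ?_⟩
    rw [coeff_amice, inverseAmice_apply_mahlerQp]
  · simp only [coeff_amice, opNorm_eq_iSup_norm_apply_mahlerQp]
end

section
/- Let $f : V \to \mathbb{Z}$ be a locally constant function with bounded support on a finite-dimensional $\mathbb{Q}$-vector space $V$ with lattice $L$, and suppose $f$ is periodic with respect to full-rank sublattices $M \subseteq M'$ of $V$. Then $\frac{1}{[L:M]}\sum_{v \in V/M} f(v) = \frac{1}{[L:M']}\sum_{v \in V/M'} f(v)$; i.e. the Haar functional $h_V(f)$ is well-defined independently of the choice of period lattice. -/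
/-!
Write `π : V ⧸ M → V ⧸ M'` for the projection. Since both `g` and `g'` come from `f`, `g = g' ∘ π`,
and every fibre of `π` is a coset of `M' / M`, which has `[M' : M]` elements because `M` is a
full lattice and `M'` is finitely generated. Hence `∑_{V/M} g = [M' : M] · ∑_{V/M'} g'`, while
the tower law for relative indices gives `[L : M] = [L : M'] · [M' : M]`.
-/

variable {V : Type*} [AddCommGroup V] [Module ℚ V]

/-- A full-rank lattice in a `ℚ`-vector space. -/
def IsFullLattice (M : AddSubgroup V) : Prop :=
  M.FG ∧ Submodule.span ℚ (M : Set V) = ⊤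

/-- The generalized index `[L : M] ∈ ℚ` of commensurable subgroups,
`[L : L ∩ M] / [M : L ∩ M]`. -/
noncomputable def genIndex (L M : AddSubgroup V) : ℚ :=
  (((L ⊓ M).addSubgroupOf L).index : ℚ) / (((L ⊓ M).addSubgroupOf M).index : ℚ)

theorem QuotientAddGroup.finsum_comp_mk {Q R : Type*} [AddGroup Q] [AddCommMonoid R]
    (K : AddSubgroup Q) [Finite K] (h : Q ⧸ K → R) (hh : (Function.support h).Finite) :
    ∑ᶠ x : Q, h x = Nat.card K • ∑ᶠ y, h y := by
  have : Fintype K := Fintype.ofFinite ↥K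
  have hprod : Function.HasFiniteSupport fun p : (Q ⧸ K) × K => h p.1 :=
    (hh.prod (Set.finite_univ (α := K))).subset fun p hp => ⟨hp, Set.mem_univ p.2⟩
  calc ∑ᶠ x : Q, h x
      = ∑ᶠ p : (Q ⧸ K) × K, h p.1 := by
        have hfst (x : Q) : (AddSubgroup.addGroupEquivQuotientProdAddSubgroup (s := K) x).1 = x := by
          simp [AddSubgroup.addGroupEquivQuotientProdAddSubgroup]
        simp only [← hfst]
        exact finsum_comp_equiv (f := fun p : (Q ⧸ K) × K => h p.1) _
    _ = ∑ᶠ y, Nat.card K • h y := by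
        rw [finsum_curry _ hprod]
        simp [finsum_eq_sum_of_fintype, Finset.sum_const, Nat.card_eq_fintype_card]
    _ = Nat.card K • ∑ᶠ y, h y := (smul_finsum' _ hh).symm

theorem QuotientAddGroup.finsum_comp_map {G R : Type*} [AddGroup G] [AddCommMonoid R]
    {M M' : AddSubgroup G} [M.Normal] [M'.Normal] (hMM' : M ≤ M') (hfin : M.relIndex M' ≠ 0)
    (h : G ⧸ M' → R) (hh : (Function.support h).Finite) :
    ∑ᶠ x : G ⧸ M, h (map M M' (AddMonoidHom.id G) hMM' x) = M.relIndex M' • ∑ᶠ y, h y := by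
  let e := quotientQuotientEquivQuotient M M' hMM'
  have hcard : Nat.card (M'.map (mk' M)) = M.relIndex M' := by
    rw [← AddSubgroup.relIndex_ker, ker_mk']
  have : Finite (M'.map (mk' M)) := Nat.finite_of_card_ne_zero (hcard ▸ hfin)
  have hhe : (Function.support (h ∘ e)).Finite := by
    rw [Function.support_comp_eq_preimage]
    exact hh.preimage e.injective.injOn
  calc ∑ᶠ x : G ⧸ M, h (map M M' (AddMonoidHom.id G) hMM' x)
      = ∑ᶠ x : G ⧸ M, (h ∘ e) x := rfl
    _ = M.relIndex M' • ∑ᶠ z, h (e z) := by rw [finsum_comp_mk _ _ hhe, hcard]; rfl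
    _ = M.relIndex M' • ∑ᶠ y, h y := congrArg _ (finsum_comp_equiv e.toEquiv)

/-- The tower law `[L : M] = [L : M'] · [M' : M]` for generalized indices, cleared of
denominators. -/
theorem AddSubgroup.relIndex_mul_relIndex_eq_of_le {G : Type*} [AddGroup G]
    (L : AddSubgroup G) {M M' : AddSubgroup G} (hMM' : M ≤ M') :
    M.relIndex L * L.relIndex M' = M'.relIndex L * (L.relIndex M * M.relIndex M') := by
  have hL : (L ⊓ M).relIndex (L ⊓ M') * M'.relIndex L = M.relIndex L := by
    have := relIndex_mul_relIndex _ _ _ (inf_le_inf_left L hMM') (inf_le_left : L ⊓ M' ≤ L)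
    rwa [inf_relIndex_left, inf_relIndex_left] at this
  have hM' : (L ⊓ M).relIndex (L ⊓ M') * L.relIndex M' = (L ⊓ M).relIndex M' := by
    have := relIndex_mul_relIndex _ _ _ (inf_le_inf_left L hMM') (inf_le_right : L ⊓ M' ≤ M')
    rwa [inf_relIndex_right] at this
  have hM : L.relIndex M * M.relIndex M' = (L ⊓ M).relIndex M' := by
    have := relIndex_mul_relIndex _ _ _ (inf_le_right : L ⊓ M ≤ M) hMM'
    rwa [inf_relIndex_right] at this
  rw [← hL, hM, ← hM']
  ring

theorem genIndex_eq_div {G : Type*} [AddCommGroup G] (L M : AddSubgroup G) :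
    genIndex L M = (M.relIndex L : ℚ) / (L.relIndex M : ℚ) := by
  rw [genIndex, ← AddSubgroup.relIndex, ← AddSubgroup.relIndex,
    AddSubgroup.inf_relIndex_left, AddSubgroup.inf_relIndex_right]

theorem genIndex_eq_genIndex_mul_relIndex {G : Type*} [AddCommGroup G] {L M M' : AddSubgroup G}
    (hMM' : M ≤ M') (hM : L.relIndex M ≠ 0) (hM' : L.relIndex M' ≠ 0) :
    genIndex L M = genIndex L M' * M.relIndex M' := by
  rw [genIndex_eq_div, genIndex_eq_div, div_mul_eq_mul_div, div_eq_div_iff (by exact_mod_cast hM)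
    (by exact_mod_cast hM')]
  exact_mod_cast (L.relIndex_mul_relIndex_eq_of_le hMM').trans (by ring)

theorem IsFullLattice.exists_nsmul_mem {M : AddSubgroup V} (hM : IsFullLattice M) (v : V) :
    ∃ n : ℕ, 0 < n ∧ n • v ∈ M := by
  have hv : v ∈ Submodule.span ℚ (M : Set V) := hM.2 ▸ Submodule.mem_top
  induction hv using Submodule.span_induction with
  | mem x hx => exact ⟨1, one_pos, by simpa using hx⟩
  | zero => exact ⟨1, one_pos, by simp⟩
  | add x y _ _ hx hy =>
    obtain ⟨m, hm, hmx⟩ := hx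
    obtain ⟨k, hk, hky⟩ := hy
    refine ⟨m * k, Nat.mul_pos hm hk, ?_⟩
    rw [smul_add]
    refine M.add_mem ?_ ?_
    · rw [mul_nsmul]; exact M.nsmul_mem hmx k
    · rw [mul_comm, mul_nsmul]; exact M.nsmul_mem hky m
  | smul q x _ hx =>
    obtain ⟨m, hm, hmx⟩ := hx
    refine ⟨m * q.den, Nat.mul_pos hm q.pos, ?_⟩
    have hrw : (m * q.den) • (q • x) = q.num • (m • x) := by
      rw [← Nat.cast_smul_eq_nsmul ℚ, ← Nat.cast_smul_eq_nsmul ℚ, ← Int.cast_smul_eq_zsmul ℚ,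
        smul_smul, smul_smul, Nat.cast_mul, mul_assoc, Rat.den_mul_eq_num, mul_comm]
    rw [hrw]
    exact M.zsmul_mem hmx q.num

theorem IsFullLattice.relIndex_ne_zero {A B : AddSubgroup V} (hA : IsFullLattice A)
    (hB : B.FG) : A.relIndex B ≠ 0 := by
  have : AddGroup.FG B := (AddGroup.fg_iff_addSubgroup_fg B).mpr hB
  have htorsion : IsAddTorsion (B ⧸ A.addSubgroupOf B) := by
    intro x
    induction x using QuotientAddGroup.induction_on with
    | H b =>
      obtain ⟨n, hn, hmem⟩ := hA.exists_nsmul_mem (b : V)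
      refine isOfFinAddOrder_iff_nsmul_eq_zero.mpr ⟨n, hn, ?_⟩
      rw [← QuotientAddGroup.mk_nsmul, QuotientAddGroup.eq_zero_iff,
        AddSubgroup.mem_addSubgroupOf, AddSubgroup.coe_nsmul]
      exact hmem
  have : Finite (B ⧸ A.addSubgroupOf B) := AddCommGroup.finite_of_fg_isAddTorsion _ htorsion
  exact AddSubgroup.index_ne_zero_of_finite

theorem stmt8_general (L M M' : AddSubgroup V)
    (hL : IsFullLattice L) (hM : IsFullLattice M) (hM' : IsFullLattice M')
    (hMM' : M ≤ M') (f : V → ℤ)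
    (g : V ⧸ M → ℤ) (g' : V ⧸ M' → ℤ)
    (hg : ∀ v : V, g (QuotientAddGroup.mk v) = f v)
    (hg' : ∀ v : V, g' (QuotientAddGroup.mk v) = f v)
    (hg'fin : (Function.support g').Finite) :
    (genIndex L M)⁻¹ * ∑ᶠ x : V ⧸ M, (g x : ℚ) =
      (genIndex L M')⁻¹ * ∑ᶠ x : V ⧸ M', (g' x : ℚ) := by
  have hk : M.relIndex M' ≠ 0 := hM.relIndex_ne_zero hM'.1
  have hsum : ∑ᶠ x : V ⧸ M, (g x : ℚ) = M.relIndex M' • ∑ᶠ y : V ⧸ M', (g' y : ℚ) := by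
    rw [← QuotientAddGroup.finsum_comp_map hMM' hk _ (hg'fin.subset fun y hy => by simpa using hy)]
    congr 1 with x
    induction x using QuotientAddGroup.induction_on with
    | H v => rw [hg, ← hg' v]; rfl
  rw [hsum, genIndex_eq_genIndex_mul_relIndex hMM' (hL.relIndex_ne_zero hM.1)
    (hL.relIndex_ne_zero hM'.1), nsmul_eq_mul]
  field_simp

/-- The Haar functional `h_V(f) = [L:M]⁻¹ ∑_{v ∈ V/M} f(v)` is independent of the choice
of full-rank period lattice `M ⊆ M'` for a locally constant, boundedly supported `f`. -/
theorem stmt8 [FiniteDimensional ℚ V] (L M M' : AddSubgroup V)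
    (hL : IsFullLattice L) (hM : IsFullLattice M) (hM' : IsFullLattice M')
    (hMM' : M ≤ M') (f : V → ℤ)
    (hper : ∀ v : V, ∀ m ∈ M', f (v + m) = f v)
    (g : V ⧸ M → ℤ) (g' : V ⧸ M' → ℤ)
    (hg : ∀ v : V, g (QuotientAddGroup.mk v) = f v)
    (hg' : ∀ v : V, g' (QuotientAddGroup.mk v) = f v)
    (hgfin : (Function.support g).Finite) (hg'fin : (Function.support g').Finite) :
    (genIndex L M)⁻¹ * ∑ᶠ x : V ⧸ M, (g x : ℚ) =
      (genIndex L M')⁻¹ * ∑ᶠ x : V ⧸ M', (g' x : ℚ) :=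
  stmt8_general L M M' hL hM hM' hMM' f g g' hg hg' hg'fin
end

section
/- The Haar functional $h_V$ on test functions is translation invariant: for every locally constant, boundedly supported $f : V \to \mathbb{Z}$ and every $w \in V$, $h_V(f(\cdot + w)) = h_V(f)$. -/
variable {V : Type*} [AddCommGroup V] [Module ℚ V]

/-- Translation invariance of the Haar functional: `h_V(f(· + w)) = h_V(f)`, where
`h_V(f) = [L:M]⁻¹ ∑_{v ∈ V/M} f(v)` is computed with any full-rank period lattice `M`
of `f` (which is also a period lattice of the translate `f(· + w)`). -/
theorem stmt9 [FiniteDimensional ℚ V] (L M : AddSubgroup V)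
    (hL : IsFullLattice L) (hM : IsFullLattice M)
    (f : V → ℤ) (w : V)
    (hper : ∀ v : V, ∀ m ∈ M, f (v + m) = f v)
    (g gw : V ⧸ M → ℤ)
    (hg : ∀ v : V, g (QuotientAddGroup.mk v) = f v)
    (hgw : ∀ v : V, gw (QuotientAddGroup.mk v) = f (v + w))
    (hgfin : (Function.support g).Finite) (hgwfin : (Function.support gw).Finite) :
    (genIndex L M)⁻¹ * ∑ᶠ x : V ⧸ M, (gw x : ℚ) =
      (genIndex L M)⁻¹ * ∑ᶠ x : V ⧸ M, (g x : ℚ) := by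
  congr 1
  have key : ∀ x : V ⧸ M, gw x = g (x + QuotientAddGroup.mk w) := by
    intro x
    induction x using QuotientAddGroup.induction_on with
    | H v =>
      rw [hgw v, ← QuotientAddGroup.mk_add, hg]
  calc ∑ᶠ x : V ⧸ M, (gw x : ℚ)
      = ∑ᶠ x : V ⧸ M, (g (Equiv.addRight (QuotientAddGroup.mk w) x) : ℚ) := by
        simp only [key]; rfl
    _ = ∑ᶠ x : V ⧸ M, (g x : ℚ) := finsum_comp_equiv (f := fun x => (g x : ℚ)) _
end

section
/- (Hill) Let $V$ be an $n$-dimensional $\mathbb{Q}$-vector space with basis $w_1, \ldots, w_n$, let $F = \mathbb{Q}((\varepsilon_1))\cdots((\varepsilon_n))$, and set $b_i = w_1 + \varepsilon_i w_2 + \cdots + \varepsilon_i^{n-1} w_n \in V \otimes_{\mathbb{Q}} F$ for $1 \leq i \leq n$. Then for any $\alpha_1, \ldots, \alpha_n \in \mathrm{GL}(V)$, the vectors $\alpha_1 b_1, \ldots, \alpha_n b_n$ form an $F$-basis of $V \otimes_{\mathbb{Q}} F$. -/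
/-!
Expanding the determinant of the vectors `αᵢbᵢ` multilinearly in its rows gives
`∑ₓ det Nₓ · ∏ᵢ εᵢ ^ xᵢ`, where `x` runs over maps `Fin n → Fin n` and `Nₓ` is the rational matrix
whose `i`-th row is column `xᵢ` of the matrix of `αᵢ`. The monomials `∏ᵢ εᵢ ^ xᵢ` are linearly
independent over `ℚ`, so it suffices that some `Nₓ` is invertible. Since the columns of each
invertible matrix span `ℚⁿ`, such rows can be chosen greedily, each outside the span of the
previous ones.
-/

/-- The iterated Laurent series field `𝔽 = ℚ((ε₁))⋯((εₙ))`. -/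
abbrev HillField (n : ℕ) := HahnSeries (Lex (Fin n → ℤ)) ℚ

/-- The variable `εᵢ` of the iterated Laurent series field. -/
noncomputable def eps {n : ℕ} (i : Fin n) : HillField n :=
  HahnSeries.single (toLex (Pi.single i (1 : ℤ))) (1 : ℚ)

open Module Submodule Matrix

section Transversal

variable {K W η : Type*} [Field K] [AddCommGroup W] [Module K W]

theorem exists_notMem_of_span_range_eq_top {f : η → W} (hf : span K (Set.range f) = ⊤)
    {S : Submodule K W} (hS : S ≠ ⊤) : ∃ j, f j ∉ S := by
  by_contra! h
  exact hS (top_unique (hf ▸ span_le.2 (Set.range_subset_iff.2 h)))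

theorem exists_linearIndependent_of_span_range_eq_top [FiniteDimensional K W] {m : ℕ}
    (hm : m ≤ finrank K W) (v : Fin m → η → W) (hv : ∀ i, span K (Set.range (v i)) = ⊤) :
    ∃ k : Fin m → η, LinearIndependent K fun i => v i (k i) := by
  induction m with
  | zero => exact ⟨finZeroElim, linearIndependent_empty_type⟩
  | succ m ih =>
    obtain ⟨k, hk⟩ := ih (by omega) (fun i => v i.castSucc) fun i => hv _
    have hspan : span K (Set.range fun i => v i.castSucc (k i)) ≠ ⊤ := fun h => by
      have := finrank_span_eq_card hk
      rw [h, finrank_top, Fintype.card_fin] at this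
      omega
    obtain ⟨j, hj⟩ := exists_notMem_of_span_range_eq_top (hv (Fin.last m)) hspan
    refine ⟨Fin.snoc k j, ?_⟩
    convert linearIndependent_finSnoc.2 ⟨hk, hj⟩ using 1
    ext i : 1
    refine Fin.lastCases ?_ (fun i => ?_) i <;> simp

end Transversal

theorem Matrix.det_of_sum_smul {R ι κ : Type*} [CommRing R] [Fintype ι] [DecidableEq ι]
    [Fintype κ] (t : ι → κ → R) (v : ι → κ → ι → R) :
    det (of fun i => ∑ k, t i k • v i k) =
      ∑ x : ι → κ, (∏ i, t i (x i)) * det (of fun i => v i (x i)) := by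
  have := (detRowAlternating : (ι → R) [⋀^ι]→ₗ[R] R).toMultilinearMap.map_sum
    fun i k => t i k • v i k
  simp only [AlternatingMap.coe_multilinearMap, AlternatingMap.map_smul_univ, smul_eq_mul] at this
  exact this

theorem linearIndependent_sum_algebraMap_mul {K L : Type*} [Field K] [Field L] [Algebra K L]
    {n : ℕ} (t : Fin n → Fin n → L)
    (ht : LinearIndependent K fun x : Fin n → Fin n => ∏ i, t i (x i))
    (M : Fin n → Matrix (Fin n) (Fin n) K) (hM : ∀ i, IsUnit (M i)) :
    LinearIndependent L fun i j => ∑ k, algebraMap K L (M i j k) * t i k := by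
  obtain ⟨k, hk⟩ := exists_linearIndependent_of_span_range_eq_top (by simp) (fun i => (M i)ᵀ)
    fun i => (linearIndependent_cols_iff_isUnit.2 (hM i)).span_eq_top_of_card_eq_finrank' (by simp)
  refine (linearIndependent_rows_iff_isUnit
    (A := of fun i j => ∑ k, algebraMap K L (M i j k) * t i k)).2 ?_
  have hexp : (of fun i j => ∑ k, algebraMap K L (M i j k) * t i k).det =
      ∑ x : Fin n → Fin n, (of fun i j => M i j (x i)).det • ∏ i, t i (x i) := by
    convert det_of_sum_smul t (fun i k j => algebraMap K L (M i j k)) using 1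
    · congr; ext i j; simp [mul_comm]
    · congr; ext x
      rw [Algebra.smul_def, mul_comm, (algebraMap K L).map_det]
      rfl
  rw [isUnit_iff_isUnit_det, isUnit_iff_ne_zero, hexp]
  intro h
  exact ((isUnit_iff_isUnit_det _).1 (linearIndependent_rows_iff_isUnit.1 hk)).ne_zero
    (Fintype.linearIndependent_iff.1 ht _ h k)

namespace HahnSeries

theorem linearIndependent_single_one {Γ R : Type*} [PartialOrder Γ] [Ring R] :
    LinearIndependent R fun a : Γ => (single a (1 : R) : HahnSeries Γ R) := by
  classical
  refine linearIndependent_iff'.2 fun s g hg a ha => ?_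
  simpa [coeff_sum, coeff_single, ha] using congr_arg (·.coeff a) hg

theorem prod_single {Γ R ι : Type*} [AddCommMonoid Γ] [PartialOrder Γ]
    [IsOrderedCancelAddMonoid Γ] [CommSemiring R] (s : Finset ι) (a : ι → Γ) (r : ι → R) :
    ∏ i ∈ s, single (a i) (r i) = single (∑ i ∈ s, a i) (∏ i ∈ s, r i) := by
  induction s using Finset.cons_induction with
  | empty => rfl
  | cons i s hi ih => simp [ih, single_mul_single]

end HahnSeries

theorem eps_pow {n : ℕ} (i : Fin n) (m : ℕ) :
    eps i ^ m = HahnSeries.single (toLex (Pi.single i (m : ℤ))) (1 : ℚ) := by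
  rw [eps, HahnSeries.single_pow, one_pow]
  change HahnSeries.single (toLex (m • Pi.single i 1)) 1 = _
  rw [← Pi.single_smul', nsmul_one]

theorem prod_eps_pow {n : ℕ} (x : Fin n → ℕ) :
    ∏ i, eps i ^ x i = HahnSeries.single (toLex fun i => (x i : ℤ)) (1 : ℚ) := by
  simp only [eps_pow, HahnSeries.prod_single, Finset.prod_const_one]
  exact congrArg (HahnSeries.single · 1)
    ((map_sum (toLexAddEquiv _) _ _).symm.trans (congrArg toLex (Finset.univ_sum_single _)))

theorem linearIndependent_prod_eps_pow (n : ℕ) :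
    LinearIndependent ℚ fun x : Fin n → Fin n => ∏ i, eps i ^ (x i : ℕ) := by
  simp only [prod_eps_pow]
  refine HahnSeries.linearIndependent_single_one.comp _ (toLex.injective.comp fun x y h => ?_)
  exact funext fun i => Fin.ext (by exact_mod_cast congrFun h i)

/-- `V ⊗_ℚ 𝔽` is identified with `Fin n → 𝔽` via the coordinates of the basis `w`, so that
`αᵢbᵢ` has `j`-th coordinate `∑ₖ Mᵢ(j,k) εᵢᵏ` where `Mᵢ` is the matrix of `αᵢ` in the
basis `w`. -/
theorem stmt13 (n : ℕ) {V : Type*} [AddCommGroup V] [Module ℚ V]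
    (w : Module.Basis (Fin n) ℚ V) (A : Fin n → (V ≃ₗ[ℚ] V)) :
    let c : Fin n → (Fin n → HillField n) := fun i j =>
      ∑ k : Fin n,
        algebraMap ℚ (HillField n) (LinearMap.toMatrix w w (A i).toLinearMap j k) *
          (eps i) ^ (k : ℕ)
    LinearIndependent (HillField n) c ∧
      Submodule.span (HillField n) (Set.range c) = ⊤ := by
  intro c
  have hc : LinearIndependent (HillField n) c :=
    linearIndependent_sum_algebraMap_mul (fun i k => eps i ^ (k : ℕ))
      (linearIndependent_prod_eps_pow n) _
      fun i => (LinearMap.isUnit_toMatrix_iff w).2 ((Module.End.isUnit_iff _).2 (A i).bijective)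
  exact ⟨hc, hc.span_eq_top_of_card_eq_finrank' (by simp)⟩
end

section
/- (Shintani, real quadratic case) Let $F$ be a real quadratic field embedded in $\mathbb{R}^2$ via its two real embeddings, and let $\varepsilon > 1$ be a totally positive unit generating a finite-index subgroup $E = \langle\varepsilon\rangle$ of the totally positive units. Then the set $D = \{a \cdot 1 + b\varepsilon : a > 0, b \geq 0\} \subset \mathbb{R}^2_{>0}$ (the open cone on $1, \varepsilon$ together with the open ray through $1$) is a fundamental domain for the multiplication action of $E$ on $\mathbb{R}^2_{>0}$: the sets $\varepsilon^k D$, $k \in \mathbb{Z}$, are pairwise disjoint and their union is $\mathbb{R}^2_{>0}$. -/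
/-!
Write `t = τ₁(ε)`. Since `τ₁(ε) τ₂(ε) = N(ε) = 1`, multiplying by `εᵏ` scales the ratio
`x₁ / x₂` of a point of `ℝ²_{>0}` by `t^{2k}`, and `D` is exactly the set of points of
`ℝ²_{>0}` whose ratio lies in `[1, t²)`. So `εᵏ D` consists of the points with ratio in
`[t^{2k}, t^{2k+2})`, and these intervals partition `(0, ∞)`.
-/

open NumberField Set

theorem RingHom.map_units_zpow {R K : Type*} [CommRing R] [Field K] (f : R →+* K) (u : Rˣ)
    (k : ℤ) : f ↑(u ^ k) = f ↑u ^ k := by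
  change ((Units.map f.toMonoidHom (u ^ k) : Kˣ) : K) = _
  rw [map_zpow, Units.val_zpow_eq_zpow_val]
  rfl

section RealQuadratic

variable {F : Type*} [Field F] [NumberField F] {τ₁ τ₂ : F →+* ℝ}

theorem mul_eq_norm_of_finrank_eq_two (hdeg : Module.finrank ℚ F = 2) (hττ : τ₁ ≠ τ₂)
    (x : F) : τ₁ x * τ₂ x = Algebra.norm ℚ x := by
  classical
  let σ₁ : F →ₐ[ℚ] ℂ := (Complex.ofRealHom.comp τ₁).toRatAlgHom
  let σ₂ : F →ₐ[ℚ] ℂ := (Complex.ofRealHom.comp τ₂).toRatAlgHom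
  have hσ : σ₁ ≠ σ₂ := fun h => hττ <| RingHom.ext fun y =>
    Complex.ofReal_injective (DFunLike.congr_fun h y)
  have huniv : (Finset.univ : Finset (F →ₐ[ℚ] ℂ)) = {σ₁, σ₂} := by
    refine (Finset.eq_of_subset_of_card_le (Finset.subset_univ _) ?_).symm
    rw [Finset.card_univ, AlgHom.card, hdeg, Finset.card_pair hσ]
  have hnorm := Algebra.norm_eq_prod_embeddings ℚ ℂ x
  rw [huniv, Finset.prod_pair hσ, eq_ratCast] at hnorm
  have hℂ : ((τ₁ x * τ₂ x : ℝ) : ℂ) = ((Algebra.norm ℚ x : ℝ) : ℂ) := by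
    push_cast
    exact hnorm.symm
  exact_mod_cast hℂ

theorem unit_mul_eq_one_of_pos (hdeg : Module.finrank ℚ F = 2) (hττ : τ₁ ≠ τ₂) (ε : (𝓞 F)ˣ)
    (h₁ : 0 < τ₁ (algebraMap (𝓞 F) F ε)) (h₂ : 0 < τ₂ (algebraMap (𝓞 F) F ε)) :
    τ₁ (algebraMap (𝓞 F) F ε) * τ₂ (algebraMap (𝓞 F) F ε) = 1 := by
  have hnorm := NumberField.isUnit_iff_norm.mp ε.isUnit
  rw [RingOfIntegers.coe_norm] at hnorm
  have hprod := mul_eq_norm_of_finrank_eq_two hdeg hττ (algebraMap (𝓞 F) F ε)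
  rcases abs_eq zero_le_one |>.mp hnorm with h | h
  · simpa [h] using hprod
  · rw [h] at hprod
    push_cast at hprod
    nlinarith [mul_pos h₁ h₂]

end RealQuadratic

def shintaniCone (t s : ℝ) : Set (ℝ × ℝ) :=
  {x | ∃ a b : ℝ, 0 < a ∧ 0 ≤ b ∧ x = (a + b * t, a + b * s)}

def shintaniTranslate (t s : ℝ) (k : ℤ) : Set (ℝ × ℝ) :=
  (fun x : ℝ × ℝ => (t ^ k * x.1, s ^ k * x.2)) '' shintaniCone t s

theorem eq_of_mem_Ico_zpow {K : Type*} [Field K] [LinearOrder K] [IsStrictOrderedRing K]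
    {B r : K} (hB : 1 < B) {k l : ℤ} (hk : r ∈ Ico (B ^ k) (B ^ (k + 1)))
    (hl : r ∈ Ico (B ^ l) (B ^ (l + 1))) : k = l := by
  have hkl : k < l + 1 := (zpow_lt_zpow_iff_right₀ hB).1 (hk.1.trans_lt hl.2)
  have hlk : l < k + 1 := (zpow_lt_zpow_iff_right₀ hB).1 (hl.1.trans_lt hk.2)
  omega

section ShintaniCone

variable {t s : ℝ}

theorem mem_shintaniCone_iff (ht : 1 < t) (hts : t * s = 1) {p : ℝ × ℝ} :
    p ∈ shintaniCone t s ↔ 0 < p.2 ∧ p.2 ≤ p.1 ∧ p.1 < t ^ 2 * p.2 := by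
  have hs : 0 < s := pos_of_mul_pos_right (hts ▸ one_pos) (by linarith)
  have hst : s < t := by nlinarith
  constructor
  · rintro ⟨a, b, ha, hb, rfl⟩
    refine ⟨by positivity, by nlinarith, ?_⟩
    have hscale : t ^ 2 * (a + b * s) = t ^ 2 * a + b * t := by
      linear_combination b * t * hts
    dsimp only
    rw [hscale]
    nlinarith [mul_pos ha (by nlinarith : 0 < t ^ 2 - 1)]
  · obtain ⟨u, v⟩ := p
    rintro ⟨hv, hvu, hut⟩
    have hd : 0 < t - s := by linarith
    refine ⟨(t * v - s * u) / (t - s), (u - v) / (t - s), div_pos ?_ hd,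
      div_nonneg (by linarith) hd.le, ?_⟩
    · nlinarith
    · ext <;> field_simp <;> ring

theorem mem_shintaniTranslate_iff (ht : 1 < t) (hts : t * s = 1) {k : ℤ} {p : ℝ × ℝ} :
    p ∈ shintaniTranslate t s k ↔
      0 < p.2 ∧ p.1 / p.2 ∈ Ico ((t ^ 2) ^ k) ((t ^ 2) ^ (k + 1)) := by
  have ht0 : t ≠ 0 := by positivity
  obtain rfl : s = t⁻¹ := eq_inv_of_mul_eq_one_right hts
  have htk : 0 < t ^ k := zpow_pos (by positivity) k
  rw [shintaniTranslate,
    image_eq_preimage_of_inverse (g := fun x => (t ^ (-k) * x.1, t ^ k * x.2)), mem_preimage,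
    mem_shintaniCone_iff ht hts]
  · obtain ⟨u, v⟩ := p
    have hsq : (t ^ 2) ^ k = (t ^ k) ^ 2 := by
      rw [← zpow_natCast, ← zpow_natCast, ← zpow_mul, ← zpow_mul, mul_comm]
    simp only [zpow_neg, mem_Ico, zpow_add_one₀ (pow_ne_zero 2 ht0), hsq,
      mul_pos_iff_of_pos_left htk]
    refine and_congr_right fun hv => ?_
    rw [le_div_iff₀ hv, div_lt_iff₀ hv, le_inv_mul_iff₀ htk, inv_mul_lt_iff₀ htk]
    constructor <;> rintro ⟨h₁, h₂⟩ <;> exact ⟨by linarith, by linarith⟩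
  · intro x
    simp [zpow_neg, htk.ne']
  · intro x
    simp [zpow_neg, htk.ne']

theorem pairwiseDisjoint_shintaniTranslate (ht : 1 < t) (hts : t * s = 1) :
    (univ : Set ℤ).PairwiseDisjoint (shintaniTranslate t s) := by
  intro k _ l _ hkl
  refine disjoint_left.2 fun p hk hl => hkl ?_
  rw [mem_shintaniTranslate_iff ht hts] at hk hl
  exact eq_of_mem_Ico_zpow (one_lt_pow₀ ht two_ne_zero) hk.2 hl.2

theorem iUnion_shintaniTranslate (ht : 1 < t) (hts : t * s = 1) :
    ⋃ k, shintaniTranslate t s k = {x | 0 < x.1 ∧ 0 < x.2} := by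
  ext p
  simp only [mem_iUnion, mem_shintaniTranslate_iff ht hts, mem_ofPred_eq]
  constructor
  · rintro ⟨k, hv, hk, -⟩
    exact ⟨(div_pos_iff_of_pos_right hv).1 ((zpow_pos (by positivity) k).trans_le hk), hv⟩
  · rintro ⟨hu, hv⟩
    obtain ⟨k, hk⟩ := exists_mem_Ico_zpow (div_pos hu hv) (one_lt_pow₀ ht two_ne_zero)
    exact ⟨k, hv, hk⟩

end ShintaniCone

theorem stmt16_general (F : Type*) [Field F] [NumberField F]
    (hdeg : Module.finrank ℚ F = 2)
    (τ₁ τ₂ : F →+* ℝ) (hττ : τ₁ ≠ τ₂)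
    (ε : (𝓞 F)ˣ)
    (hpos₂ : 0 < τ₂ (algebraMap (𝓞 F) F (ε : 𝓞 F)))
    (hbig : 1 < τ₁ (algebraMap (𝓞 F) F (ε : 𝓞 F))) :
    let e₁ : ℤ → ℝ := fun k => τ₁ (algebraMap (𝓞 F) F ((ε ^ k : (𝓞 F)ˣ) : 𝓞 F))
    let e₂ : ℤ → ℝ := fun k => τ₂ (algebraMap (𝓞 F) F ((ε ^ k : (𝓞 F)ˣ) : 𝓞 F))
    let D : Set (ℝ × ℝ) := {x | ∃ a b : ℝ, 0 < a ∧ 0 ≤ b ∧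
      x = (a + b * e₁ 1, a + b * e₂ 1)}
    let T : ℤ → Set (ℝ × ℝ) := fun k => (fun x : ℝ × ℝ => (e₁ k * x.1, e₂ k * x.2)) '' D
    (Set.univ : Set ℤ).PairwiseDisjoint T ∧
      (⋃ k : ℤ, T k) = {x : ℝ × ℝ | 0 < x.1 ∧ 0 < x.2} := by
  have hε := unit_mul_eq_one_of_pos hdeg hττ ε (by linarith) hpos₂
  simp only [RingHom.map_units_zpow, map_zpow₀, zpow_one]
  exact ⟨pairwiseDisjoint_shintaniTranslate hbig hε, iUnion_shintaniTranslate hbig hε⟩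

/-- **Shintani's fundamental domain, real quadratic case.** Let `F` be a real quadratic
field with real embeddings `τ₁, τ₂`, and `ε` a totally positive unit with `τ₁(ε) > 1`.
Then `D = {a·(1,1) + b·(τ₁ε, τ₂ε) : a > 0, b ≥ 0}` is a fundamental domain for the
action of `⟨ε⟩` on `ℝ²_{>0}` by componentwise multiplication: the translates `εᵏ·D`,
`k ∈ ℤ`, are pairwise disjoint with union `ℝ²_{>0}`. -/
theorem stmt16 (F : Type*) [Field F] [NumberField F]
    (hdeg : Module.finrank ℚ F = 2)
    (τ₁ τ₂ : F →+* ℝ) (hττ : τ₁ ≠ τ₂)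
    (ε : (𝓞 F)ˣ)
    (hpos₁ : 0 < τ₁ (algebraMap (𝓞 F) F (ε : 𝓞 F)))
    (hpos₂ : 0 < τ₂ (algebraMap (𝓞 F) F (ε : 𝓞 F)))
    (hbig : 1 < τ₁ (algebraMap (𝓞 F) F (ε : 𝓞 F))) :
    let e₁ : ℤ → ℝ := fun k => τ₁ (algebraMap (𝓞 F) F ((ε ^ k : (𝓞 F)ˣ) : 𝓞 F))
    let e₂ : ℤ → ℝ := fun k => τ₂ (algebraMap (𝓞 F) F ((ε ^ k : (𝓞 F)ˣ) : 𝓞 F))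
    let D : Set (ℝ × ℝ) := {x | ∃ a b : ℝ, 0 < a ∧ 0 ≤ b ∧
      x = (a + b * e₁ 1, a + b * e₂ 1)}
    let T : ℤ → Set (ℝ × ℝ) := fun k => (fun x : ℝ × ℝ => (e₁ k * x.1, e₂ k * x.2)) '' D
    (Set.univ : Set ℤ).PairwiseDisjoint T ∧
      (⋃ k : ℤ, T k) = {x : ℝ × ℝ | 0 < x.1 ∧ 0 < x.2} :=
  stmt16_general F hdeg τ₁ τ₂ hττ ε hpos₂ hbig
end
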